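/- arXiv:1210.3847 — 3 statements merged into one kernel-verified Lean document; each statement's English description precedes it below -/
import Mathlib

section
/- Let A = k⟨a,b,c,d,e,f,l,m⟩/⟨bc−ef, ae, da−lm, cl⟩. Then the Yoneda algebra E(A) is not finitely generated as a k-algebra: for every i ≥ 3, the multiplication map ⊕_{0<j<i, 0<k<2i−2} E^{j,k}(A) ⊗ E^{i−j, 2i−k−2}(A) → E^{i,2i−2}(A) is zero while E^{i,2i−2}(A) ≠ 0. -/
/-!
`Ext^i` lives in the single internal degree `d i` (`d 1 = 1`, `d i = 2i - 2` otherwise), and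
`d i + d j < d (i + j)` once `i, j > 0` and `i + j ≥ 3`; so every product of two classes of
positive cohomological degree landing in degree `≥ 3` vanishes. Consequently, for `N ≥ 3` the
homogeneous elements of cohomological degree `< N` span a subalgebra. Any finite set lies in
such a subalgebra, which by the direct sum decomposition misses the nonzero `Ext^N`.
-/

/-
Common framework: connected graded algebras are presented as quotients of the
free (tensor) algebra `FreeAlgebra k X` on a (finite) generating set `X` placed
in degree 1, by a set of homogeneous relations.  The (bigraded) Yoneda algebra
`E(R) = ⊕_{i,j} Ext_R^{i,j}(k,k)` of such an algebra is represented abstractly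
by an ambient `k`-algebra `E` together with a bigraded family of subspaces
`ext : ℕ → ℕ → Submodule k E`, where `ext i j` stands for `Ext_R^{i,j}(k,k)`
(`i` = cohomological degree, `j` = internal degree).
-/

noncomputable section

/-- The monomial in the free algebra `T(V)` corresponding to a word `w` in the
fixed basis `X` of `V`. -/
def FreeMonomial (k : Type*) [CommSemiring k] {X : Type*} (w : List X) : FreeAlgebra k X :=
  (w.map (FreeAlgebra.ι k)).prod

/-- The degree-`n` homogeneous component of the free algebra `T(V)`. -/
def homogComponent (k : Type*) [CommSemiring k] (X : Type*) (n : ℕ) :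
    Submodule k (FreeAlgebra k X) :=
  Submodule.span k (FreeMonomial k '' {w : List X | w.length = n})

/-- The quotient of the free algebra by the two-sided ideal generated by `S`. -/
abbrev QuotAlg (k : Type*) [CommSemiring k] (X : Type*) (S : Set (FreeAlgebra k X)) : Type _ :=
  RingQuot (fun a b : FreeAlgebra k X => a ∈ S ∧ b = 0)

/-- A bigraded family `ext i j` (standing for `Ext^{i,j}(k,k)`) generates the
ambient algebra, as a `k`-algebra, in the cohomological degrees belonging
to `S`. -/
def GeneratedInDegrees (k : Type*) [Field k] {E : Type*} [Ring E] [Algebra k E]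
    (ext : ℕ → ℕ → Submodule k E) (S : Set ℕ) : Prop :=
  Algebra.adjoin k (⋃ i ∈ S, ⋃ j, (ext i j : Set E)) = ⊤

section CassidyPhanAlgebra

variable (k : Type) [Field k]

/-- Generators `a, b, c, d, e, f, l, m` are encoded as `0,…,7 : Fin 8`. -/
def relA : Set (FreeAlgebra k (Fin 8)) :=
  { FreeMonomial k [1, 2] - FreeMonomial k [4, 5],  -- bc - ef
    FreeMonomial k [0, 4],                          -- ae
    FreeMonomial k [3, 0] - FreeMonomial k [6, 7],  -- da - lm
    FreeMonomial k [2, 6] }                         -- cl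

section BelowDegree

variable {ι R E : Type*} [AddMonoid ι] [CommSemiring R] [Semiring E] [Algebra R E]
  (𝒜 : ι → Submodule R E) (deg : ι →+ ℕ)

def belowDegree (N : ℕ) : Submodule R E :=
  ⨆ (i) (_ : deg i < N), 𝒜 i

variable {𝒜 deg}

theorem mem_belowDegree_of_mem {N : ℕ} {i : ι} {x : E} (hi : deg i < N) (hx : x ∈ 𝒜 i) :
    x ∈ belowDegree 𝒜 deg N :=
  Submodule.mem_iSup_of_mem i (Submodule.mem_iSup_of_mem hi hx)

theorem belowDegree_mono : Monotone (belowDegree 𝒜 deg) :=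
  fun _ _ hMN => iSup₂_mono' fun i hi => ⟨i, hi.trans_le hMN, le_rfl⟩

theorem disjoint_belowDegree [DecidableEq ι] [DirectSum.Decomposition 𝒜] {N : ℕ} {i : ι}
    (hi : N ≤ deg i) :
    Disjoint (𝒜 i) (belowDegree 𝒜 deg N) :=
  (DirectSum.Decomposition.isInternal 𝒜).submodule_iSupIndep.disjoint_biSup
    (y := {j | deg j < N}) hi.not_gt

theorem exists_mem_belowDegree [DecidableEq ι] [DirectSum.Decomposition 𝒜] (x : E) :
    ∃ N, x ∈ belowDegree 𝒜 deg N := by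
  classical
  refine ⟨(DirectSum.decompose 𝒜 x).support.sup deg + 1, ?_⟩
  have hsum := Submodule.sum_mem (belowDegree 𝒜 deg _) (t := (DirectSum.decompose 𝒜 x).support)
    fun i hi => mem_belowDegree_of_mem (Nat.lt_succ_of_le (Finset.le_sup hi))
      (DirectSum.decompose 𝒜 x i).2
  rwa [DirectSum.sum_support_decompose] at hsum

theorem Set.Finite.exists_subset_belowDegree [DecidableEq ι] [DirectSum.Decomposition 𝒜]
    {S : Set E} (hS : S.Finite) (N₀ : ℕ) : ∃ N, N₀ ≤ N ∧ S ⊆ belowDegree 𝒜 deg N := by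
  choose n hn using exists_mem_belowDegree (𝒜 := 𝒜) (deg := deg)
  obtain ⟨M, hM⟩ := (hS.image n).bddAbove
  exact ⟨max N₀ M, le_max_left _ _, fun s hs =>
    belowDegree_mono ((hM ⟨s, hs, rfl⟩).trans (le_max_right _ _)) (hn s)⟩

theorem mul_mem_belowDegree [SetLike.GradedMonoid 𝒜] {N : ℕ}
    (hmul : ∀ i j, deg i < N → deg j < N → N ≤ deg i + deg j →
      ∀ x ∈ 𝒜 i, ∀ y ∈ 𝒜 j, x * y = 0)
    {x y : E} (hx : x ∈ belowDegree 𝒜 deg N) (hy : y ∈ belowDegree 𝒜 deg N) :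
    x * y ∈ belowDegree 𝒜 deg N := by
  suffices belowDegree 𝒜 deg N * belowDegree 𝒜 deg N ≤ belowDegree 𝒜 deg N from
    this (Submodule.mul_mem_mul hx hy)
  simp only [belowDegree, Submodule.iSup_mul, Submodule.mul_iSup, iSup_le_iff]
  intro j hj i hi
  refine Submodule.mul_le.2 fun x hx y hy => ?_
  by_cases h : N ≤ deg i + deg j
  · rw [hmul i j hi hj h x hx y hy]
    exact zero_mem _
  · exact mem_belowDegree_of_mem (by rw [map_add]; omega) (SetLike.mul_mem_graded hx hy)

theorem not_exists_finite_adjoin_eq_top [DecidableEq ι] [GradedAlgebra 𝒜] {N₀ : ℕ}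
    (hdec : ∀ i j, 0 < deg i → 0 < deg j → N₀ ≤ deg i + deg j →
      ∀ x ∈ 𝒜 i, ∀ y ∈ 𝒜 j, x * y = 0)
    (hunbounded : ∀ N, ∃ i, N ≤ deg i ∧ 𝒜 i ≠ ⊥) :
    ¬ ∃ S : Set E, S.Finite ∧ Algebra.adjoin R S = ⊤ := by
  rintro ⟨S, hS, hgen⟩
  obtain ⟨N, hN, hSN⟩ := hS.exists_subset_belowDegree (𝒜 := 𝒜) (deg := deg) (N₀ + 1)
  let B : Subalgebra R E := (belowDegree 𝒜 deg N).toSubalgebra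
    (mem_belowDegree_of_mem (i := 0) (by rw [map_zero]; omega) (SetLike.one_mem_graded 𝒜))
    fun _ _ => mul_mem_belowDegree fun i j hi hj hij => hdec i j (by omega) (by omega) (by omega)
  obtain ⟨i, hNi, hi⟩ := hunbounded N
  obtain ⟨v, hv, hv0⟩ := (Submodule.ne_bot_iff _).1 hi
  have hvB : v ∈ B := Algebra.adjoin_le hSN (hgen ▸ Algebra.mem_top)
  exact hv0 (Submodule.disjoint_def.1 (disjoint_belowDegree hNi) v hv hvB)

end BelowDegree

section Concentrated

variable {R E : Type*} [CommSemiring R] [Semiring E] [Algebra R E]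

theorem mul_eq_zero_of_concentrated (𝒜 : ℕ × ℕ → Submodule R E) [SetLike.GradedMonoid 𝒜]
    {d : ℕ → ℕ} (hconc : ∀ i j, j ≠ d i → 𝒜 (i, j) = ⊥) {p q : ℕ × ℕ}
    (hpq : d p.1 + d q.1 ≠ d (p.1 + q.1)) {x y : E} (hx : x ∈ 𝒜 p) (hy : y ∈ 𝒜 q) :
    x * y = 0 := by
  obtain ⟨i₁, j₁⟩ := p
  obtain ⟨i₂, j₂⟩ := q
  have eq_zero {i j : ℕ} {z : E} (hz : z ∈ 𝒜 (i, j)) (hj : j ≠ d i) : z = 0 := by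
    rwa [hconc i j hj, Submodule.mem_bot] at hz
  by_cases hx₀ : j₁ = d i₁
  · by_cases hy₀ : j₂ = d i₂
    · have hxy : x * y ∈ 𝒜 (i₁ + i₂, j₁ + j₂) := SetLike.mul_mem_graded hx hy
      exact eq_zero hxy (by dsimp only at hpq; omega)
    · rw [eq_zero hy hy₀, mul_zero]
  · rw [eq_zero hx hx₀, zero_mul]

end Concentrated

/-- The internal degree carrying `Ext^i`; at `i = 0` the truncated `2 * 0 - 2` is `0`. -/
def extInternalDegree (i : ℕ) : ℕ :=
  if i = 1 then 1 else 2 * i - 2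

theorem extInternalDegree_add_lt {i j : ℕ} (hi : 0 < i) (hj : 0 < j) (hij : 3 ≤ i + j) :
    extInternalDegree i + extInternalDegree j < extInternalDegree (i + j) := by
  unfold extInternalDegree
  split_ifs <;> omega

theorem eq_bot_of_ne_extInternalDegree {R M : Type*} [Semiring R] [AddCommMonoid M] [Module R M]
    {ext : ℕ → ℕ → Submodule R M} (h0 : ∀ j, j ≠ 0 → ext 0 j = ⊥)
    (h1 : ∀ j, j ≠ 1 → ext 1 j = ⊥) (h2 : ∀ i j, 2 ≤ i → j ≠ 2 * i - 2 → ext i j = ⊥)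
    {i j : ℕ} (hj : j ≠ extInternalDegree i) : ext i j = ⊥ := by
  unfold extInternalDegree at hj
  obtain _ | _ | i := i
  · exact h0 j hj
  · exact h1 j hj
  · exact h2 _ j (by omega) hj

theorem yoneda_algebra_not_finitely_generated
    (EA : Type) [Ring EA] [Algebra k EA] (extA : ℕ → ℕ → Submodule k EA)
    [GradedAlgebra (fun p : ℕ × ℕ => extA p.1 p.2)]
    (h0 : ∀ j, j ≠ 0 → extA 0 j = ⊥) (h1 : ∀ j, j ≠ 1 → extA 1 j = ⊥)
    (h2 : ∀ i j, 2 ≤ i → j ≠ 2 * i - 2 → extA i j = ⊥)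
    (hdim : ∀ i, 2 ≤ i → Module.finrank k (extA i (2 * i - 2)) = 2) :
    (∀ i, 3 ≤ i →
      (extA i (2 * i - 2) ≠ ⊥ ∧
       ∀ j l : ℕ, 0 < j → j < i → 0 < l → l < 2 * i - 2 →
         ∀ x ∈ extA j l, ∀ y ∈ extA (i - j) (2 * i - l - 2), x * y = 0)) ∧
    ¬ ∃ S : Set EA, S.Finite ∧ Algebra.adjoin k S = ⊤ := by
  have hdec : ∀ p q : ℕ × ℕ, 0 < p.1 → 0 < q.1 → 3 ≤ p.1 + q.1 →
      ∀ x ∈ extA p.1 p.2, ∀ y ∈ extA q.1 q.2, x * y = 0 :=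
    fun p q hp hq hpq _ hx _ hy =>
      mul_eq_zero_of_concentrated (fun p : ℕ × ℕ => extA p.1 p.2)
        (fun _ _ => eq_bot_of_ne_extInternalDegree h0 h1 h2)
        (extInternalDegree_add_lt hp hq hpq).ne hx hy
  have hne : ∀ i, 2 ≤ i → extA i (2 * i - 2) ≠ ⊥ := fun i hi hbot => by
    have hrank := hdim i hi
    rw [hbot, finrank_bot] at hrank
    exact absurd hrank (by norm_num)
  refine ⟨fun i hi => ⟨hne i (by omega), fun j l hj hji _ _ x hx y hy =>
    hdec (j, l) (i - j, 2 * i - l - 2) hj (by omega) (by omega) x hx y hy⟩, ?_⟩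
  exact not_exists_finite_adjoin_eq_top (𝒜 := fun p : ℕ × ℕ => extA p.1 p.2)
    (deg := AddMonoidHom.fst ℕ ℕ) hdec
    fun N => ⟨(N + 2, 2 * (N + 2) - 2), by simp, hne (N + 2) (by omega)⟩

end CassidyPhanAlgebra
end
end

section
/- Suppose a bigraded algebra E = ⊕_{i,j≥0} E^{i,j} (connected, E^{0,0} = k) satisfies E^i = E^{i,i} for i ∈ {0,1} and E^i = E^{i,2i−2} for i ≥ 2, with E^{i,2i−2} ≠ 0 for all i ≥ 3. Then E is not generated as a k-algebra by any finite set of elements; indeed for each i ≥ 3 the product map ⊕_{0<j<i} E^j ⊗ E^{i−j} → E^i is zero. -/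
/-
Common framework: connected graded algebras are presented as quotients of the
free (tensor) algebra `FreeAlgebra k X` on a (finite) generating set `X` placed
in degree 1, by a set of homogeneous relations.  The (bigraded) Yoneda algebra
`E(R) = ⊕_{i,j} Ext_R^{i,j}(k,k)` of such an algebra is represented abstractly
by an ambient `k`-algebra `E` together with a bigraded family of subspaces
`ext : ℕ → ℕ → Submodule k E`, where `ext i j` stands for `Ext_R^{i,j}(k,k)`
(`i` = cohomological degree, `j` = internal degree).
-/

noncomputable section

/-! For `a, b > 0` with `a + b ≥ 3` the internal degrees of `E^a` and `E^b` add up to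
`2(a+b) - 3` or `2(a+b) - 4`, never to `2(a+b) - 2`, so `E^a · E^b = 0`. Hence for `N ≥ 2` the
components of cohomological degree at most `N` span a subalgebra. A finite set lies in finitely
many components, hence in such a subalgebra for `N` large, and that subalgebra misses the
nonzero component `E^{N+1}`. -/

section GradedAlgebra

variable {ι R A : Type*} [CommSemiring R] [Semiring A] [Algebra R A] (𝒜 : ι → Submodule R A)

theorem mul_eq_zero_of_graded_eq_bot [Add ι] [SetLike.GradedMul 𝒜] {i j : ι}
    (h : 𝒜 (i + j) = ⊥) {x y : A} (hx : x ∈ 𝒜 i) (hy : y ∈ 𝒜 j) : x * y = 0 := by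
  simpa [h] using SetLike.mul_mem_graded hx hy

variable [DecidableEq ι] [AddMonoid ι] [GradedAlgebra 𝒜]

theorem exists_finset_subset_biSup {S : Set A} (hS : S.Finite) :
    ∃ F : Finset ι, S ⊆ (⨆ i ∈ F, 𝒜 i : Submodule R A) := by
  classical
  refine ⟨hS.toFinset.biUnion fun s => (DirectSum.decompose 𝒜 s).support, fun s hs => ?_⟩
  rw [SetLike.mem_coe, ← DirectSum.sum_support_decompose 𝒜 s]
  refine sum_mem fun i hi => ?_
  exact Submodule.mem_iSup_of_mem i (Submodule.mem_iSup_of_mem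
    (Finset.mem_biUnion.mpr ⟨s, hS.mem_toFinset.mpr hs, hi⟩) (SetLike.coe_mem _))

theorem eq_zero_of_mem_of_mem_biSup {s : Set ι} {i : ι} (hi : i ∉ s) {x : A}
    (hx : x ∈ 𝒜 i) (hxs : x ∈ ⨆ j ∈ s, 𝒜 j) : x = 0 :=
  Submodule.disjoint_def.mp
    ((DirectSum.Decomposition.isInternal 𝒜).submodule_iSupIndep.disjoint_biSup hi) x hx hxs

variable {𝒜}

theorem biSup_mul_biSup_le {s : Set ι}
    (hmul : ∀ i ∈ s, ∀ j ∈ s, i + j ∉ s → ∀ x ∈ 𝒜 i, ∀ y ∈ 𝒜 j, x * y = 0) :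
    (⨆ i ∈ s, 𝒜 i) * (⨆ j ∈ s, 𝒜 j) ≤ ⨆ i ∈ s, 𝒜 i := by
  simp only [Submodule.iSup_mul, Submodule.mul_iSup]
  refine iSup₂_le fun j hj => iSup₂_le fun i hi => Submodule.mul_le.mpr fun x hx y hy => ?_
  by_cases hij : i + j ∈ s
  · exact Submodule.mem_iSup_of_mem (i + j) (Submodule.mem_iSup_of_mem hij
      (SetLike.mul_mem_graded hx hy))
  · rw [hmul i hi j hj hij x hx y hy]
    exact zero_mem _

theorem adjoin_le_biSup {s : Set ι} (h0 : 0 ∈ s)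
    (hmul : ∀ i ∈ s, ∀ j ∈ s, i + j ∉ s → ∀ x ∈ 𝒜 i, ∀ y ∈ 𝒜 j, x * y = 0)
    {S : Set A} (hS : S ⊆ (⨆ i ∈ s, 𝒜 i : Submodule R A)) :
    Subalgebra.toSubmodule (Algebra.adjoin R S) ≤ ⨆ i ∈ s, 𝒜 i := by
  have hone : (1 : A) ∈ ⨆ i ∈ s, 𝒜 i :=
    Submodule.mem_iSup_of_mem 0 (Submodule.mem_iSup_of_mem h0 SetLike.GradedOne.one_mem)
  exact Algebra.adjoin_le (S := Submodule.toSubalgebra _ hone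
    fun _ _ hx hy => biSup_mul_biSup_le hmul (Submodule.mul_mem_mul hx hy)) hS

theorem adjoin_ne_top_of_subset_biSup {s : Set ι} (h0 : 0 ∈ s)
    (hmul : ∀ i ∈ s, ∀ j ∈ s, i + j ∉ s → ∀ x ∈ 𝒜 i, ∀ y ∈ 𝒜 j, x * y = 0)
    {S : Set A} (hS : S ⊆ (⨆ i ∈ s, 𝒜 i : Submodule R A)) {i : ι} (hi : i ∉ s)
    (hne : 𝒜 i ≠ ⊥) : Algebra.adjoin R S ≠ ⊤ := by
  intro htop
  obtain ⟨x, hx, hx0⟩ := Submodule.exists_mem_ne_zero_of_ne_bot hne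
  have hxS : x ∈ Algebra.adjoin R S := htop ▸ Algebra.mem_top
  exact hx0 (eq_zero_of_mem_of_mem_biSup 𝒜 hi hx (adjoin_le_biSup h0 hmul hS hxS))

end GradedAlgebra

/-- The internal degree `j` with `E^i = E^{i,j}` for `i > 0`. -/
def patternDegree (i : ℕ) : ℕ := if i = 1 then 1 else 2 * i - 2

theorem patternDegree_add_ne {a b : ℕ} (ha : 0 < a) (hb : 0 < b) (hab : 3 ≤ a + b) :
    patternDegree a + patternDegree b ≠ 2 * (a + b) - 2 := by
  unfold patternDegree
  split_ifs <;> omega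

section Pattern

variable {k E : Type*} [CommSemiring k] [Semiring E] [Algebra k E] {ext : ℕ → ℕ → Submodule k E}

theorem iSup_eq_patternDegree (h1 : ∀ j, j ≠ 1 → ext 1 j = ⊥)
    (h2 : ∀ i j, 2 ≤ i → j ≠ 2 * i - 2 → ext i j = ⊥) {a : ℕ} (ha : 0 < a) :
    ⨆ l, ext a l = ext a (patternDegree a) := by
  refine le_antisymm (iSup_le fun l => ?_) (le_iSup _ _)
  by_cases hl : l = patternDegree a
  · exact hl ▸ le_rfl
  · rw [patternDegree] at hl
    split_ifs at hl with ha1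
    · subst ha1; rw [h1 l hl]; exact bot_le
    · rw [h2 a l (by omega) hl]; exact bot_le

theorem mul_eq_zero_of_three_le [SetLike.GradedMul fun p : ℕ × ℕ => ext p.1 p.2]
    (h1 : ∀ j, j ≠ 1 → ext 1 j = ⊥) (h2 : ∀ i j, 2 ≤ i → j ≠ 2 * i - 2 → ext i j = ⊥)
    {a b : ℕ} (ha : 0 < a) (hb : 0 < b) (hab : 3 ≤ a + b) {x y : E}
    (hx : x ∈ ⨆ l, ext a l) (hy : y ∈ ⨆ l, ext b l) : x * y = 0 := by
  rw [iSup_eq_patternDegree h1 h2 ha] at hx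
  rw [iSup_eq_patternDegree h1 h2 hb] at hy
  refine mul_eq_zero_of_graded_eq_bot (fun p : ℕ × ℕ => ext p.1 p.2)
    (i := (a, patternDegree a)) (j := (b, patternDegree b)) ?_ hx hy
  exact h2 (a + b) _ (by omega) (patternDegree_add_ne ha hb hab)

end Pattern

theorem bigraded_pattern_not_finitely_generated_general
    (k : Type) [Field k]
    (E : Type) [Ring E] [Algebra k E] (ext : ℕ → ℕ → Submodule k E)
    [GradedAlgebra (fun p : ℕ × ℕ => ext p.1 p.2)]
    -- E^i = E^{i,i} for i ∈ {0, 1}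
    (h1 : ∀ j, j ≠ 1 → ext 1 j = ⊥)
    -- E^i = E^{i,2i−2} for i ≥ 2
    (h2 : ∀ i j, 2 ≤ i → j ≠ 2 * i - 2 → ext i j = ⊥)
    -- E^{i,2i−2} ≠ 0 for i ≥ 3
    (hne : ∀ i, 3 ≤ i → ext i (2 * i - 2) ≠ ⊥) :
    (∀ i, 3 ≤ i → ∀ j, 0 < j → j < i →
      ∀ x ∈ (⨆ l, ext j l : Submodule k E), ∀ y ∈ (⨆ l, ext (i - j) l : Submodule k E),
        x * y = 0) ∧
    ¬ ∃ S : Set E, S.Finite ∧ Algebra.adjoin k S = ⊤ := by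
  refine ⟨fun i hi j hj hji x hx y hy =>
    mul_eq_zero_of_three_le h1 h2 hj (by omega) (by omega) hx hy, ?_⟩
  rintro ⟨S, hS, htop⟩
  obtain ⟨F, hF⟩ := exists_finset_subset_biSup (fun p : ℕ × ℕ => ext p.1 p.2) hS
  set N := max 2 (F.sup Prod.fst)
  refine adjoin_ne_top_of_subset_biSup (𝒜 := fun p : ℕ × ℕ => ext p.1 p.2)
    (s := {p | p.1 ≤ N}) (i := (N + 1, 2 * (N + 1) - 2))
    (by simp) ?_ ?_ (by simp) (hne (N + 1) (by omega)) htop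
  · intro p hp q hq hpq x hx y hy
    simp only [Set.mem_ofPred_eq, Prod.fst_add, not_le] at hp hq hpq
    exact mul_eq_zero_of_three_le h1 h2 (by omega) (by omega) (by omega)
      (Submodule.mem_iSup_of_mem p.2 hx) (Submodule.mem_iSup_of_mem q.2 hy)
  · refine hF.trans (SetLike.coe_subset_coe.mpr (biSup_mono fun p hp => ?_))
    exact (Finset.le_sup (f := Prod.fst) hp).trans (le_max_right _ _)

/-- Suppose a connected bigraded `k`-algebra `E = ⊕_{i,j} E^{i,j}` (with
`E^{0,0} = k·1`) satisfies `E^i = E^{i,i}` for `i ∈ {0,1}`, `E^i = E^{i,2i−2}`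
for `i ≥ 2`, and `E^{i,2i−2} ≠ 0` for all `i ≥ 3`.  Then for each `i ≥ 3` the
product map `⊕_{0<j<i} E^j ⊗ E^{i−j} → E^i` is zero, and `E` is not generated
as a `k`-algebra by any finite set. -/
theorem bigraded_pattern_not_finitely_generated
    (k : Type) [Field k]
    (E : Type) [Ring E] [Algebra k E] (ext : ℕ → ℕ → Submodule k E)
    [GradedAlgebra (fun p : ℕ × ℕ => ext p.1 p.2)]
    -- connectedness: E^{0,0} = k
    (hconn : ext 0 0 = Submodule.span k {(1 : E)})
    -- E^i = E^{i,i} for i ∈ {0, 1}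
    (h0 : ∀ j, j ≠ 0 → ext 0 j = ⊥) (h1 : ∀ j, j ≠ 1 → ext 1 j = ⊥)
    -- E^i = E^{i,2i−2} for i ≥ 2
    (h2 : ∀ i j, 2 ≤ i → j ≠ 2 * i - 2 → ext i j = ⊥)
    -- E^{i,2i−2} ≠ 0 for i ≥ 3
    (hne : ∀ i, 3 ≤ i → ext i (2 * i - 2) ≠ ⊥) :
    (∀ i, 3 ≤ i → ∀ j, 0 < j → j < i →
      ∀ x ∈ (⨆ l, ext j l : Submodule k E), ∀ y ∈ (⨆ l, ext (i - j) l : Submodule k E),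
        x * y = 0) ∧
    ¬ ∃ S : Set E, S.Finite ∧ Algebra.adjoin k S = ⊤ :=
  bigraded_pattern_not_finitely_generated_general k E ext h1 h2 hne
end
end

section
/- In the free algebra k⟨a,x,y,z⟩ with degree-lexicographic order induced by z > y > x > a, the set g = {xa, az, ay} ∪ {y²z², x²y² + a⁴} is a Gröbner basis for the ideal it generates. -/
/-
Common framework: connected graded algebras are presented as quotients of the
free (tensor) algebra `FreeAlgebra k X` on a (finite) generating set `X` placed
in degree 1, by a set of homogeneous relations.  The (bigraded) Yoneda algebra
`E(R) = ⊕_{i,j} Ext_R^{i,j}(k,k)` of such an algebra is represented abstractly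
by an ambient `k`-algebra `E` together with a bigraded family of subspaces
`ext : ℕ → ℕ → Submodule k E`, where `ext i j` stands for `Ext_R^{i,j}(k,k)`
(`i` = cohomological degree, `j` = internal degree).
-/

noncomputable section

section Groebner

variable (k : Type) [Field k] {X : Type} [LinearOrder X]

/-- The coefficient of the word `w` in an element of the free algebra. -/
def coeffWord (f : FreeAlgebra k X) (w : List X) : k :=
  (FreeAlgebra.equivMonoidAlgebraFreeMonoid (R := k) (X := X) f).coeff (FreeMonoid.ofList w)

/-- Degree-lexicographic order on words over the ordered alphabet `X`. -/
def DegLexLT (u v : List X) : Prop :=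
  u.length < v.length ∨ (u.length = v.length ∧ List.Lex (· < ·) u v)

/-- `w` is the leading word (leading monomial) of `f` for the deg-lex order. -/
def IsLeadWord (f : FreeAlgebra k X) (w : List X) : Prop :=
  coeffWord k f w ≠ 0 ∧ ∀ u : List X, coeffWord k f u ≠ 0 → u = w ∨ DegLexLT u w

/-- The two-sided ideal of the free algebra generated by `S`, as a
`k`-submodule. -/
def twoSidedSpan (S : Set (FreeAlgebra k X)) : Submodule k (FreeAlgebra k X) :=
  Submodule.span k {x | ∃ a g b : FreeAlgebra k X, g ∈ S ∧ x = a * g * b}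

/-- `G` is a (noncommutative) Gröbner basis for the two-sided ideal it
generates: the leading word of every nonzero element of the ideal contains
the leading word of some element of `G` as a factor (connected subword). -/
def IsGroebnerBasis (G : Set (FreeAlgebra k X)) : Prop :=
  ∀ f ∈ twoSidedSpan k G, f ≠ 0 →
    ∃ g ∈ G, ∃ wf wg : List X,
      IsLeadWord k f wf ∧ IsLeadWord k g wg ∧ wg <:+: wf

end Groebner

/-!
Let each generator `c` act on the free `k`-module on all words by sending a word `w` to the normal
form of `c w`. The five relations act by zero (this is where the overlap ambiguities resolve), so
`f ↦ f · []` kills the ideal. That map is triangular for the deg-lex order and fixes every normal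
word, i.e. every word containing none of `xa, az, ay, y²z², x²y²` as a factor. Hence the leading
word of a nonzero element of the ideal is not normal, which is the Gröbner basis property.
-/

section DegLex

variable {X : Type}

def degLexKey (w : List X) : ℕ ×ₗ List X := toLex (w.length, w)

lemma degLexKey_injective : Function.Injective (degLexKey (X := X)) := fun u v h => by
  simpa [degLexKey] using congrArg (fun p => (ofLex p).2) h

variable [LinearOrder X]

lemma degLexLT_iff_degLexKey_lt {u v : List X} : DegLexLT u v ↔ degLexKey u < degLexKey v := by
  rw [degLexKey, degLexKey, Prod.Lex.toLex_lt_toLex]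
  rfl

lemma eq_or_degLexLT_iff_degLexKey_le {u v : List X} :
    u = v ∨ DegLexLT u v ↔ degLexKey u ≤ degLexKey v := by
  rw [degLexLT_iff_degLexKey_lt, le_iff_eq_or_lt, degLexKey_injective.eq_iff]

lemma degLexKey_cons_le_cons {u v : List X} (c : X) (h : degLexKey u ≤ degLexKey v) :
    degLexKey (c :: u) ≤ degLexKey (c :: v) := by
  simp only [degLexKey, Prod.Lex.toLex_le_toLex, List.length_cons] at h ⊢
  exact h.imp Nat.succ_lt_succ fun h => ⟨congrArg _ h.1, List.cons_le_cons c h.2⟩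

end DegLex

section Coefficients

variable (k : Type) [Field k] {X : Type}

open FreeAlgebra (equivMonoidAlgebraFreeMonoid)

lemma equivMonoidAlgebraFreeMonoid_symm_single (m : FreeMonoid X) (c : k) :
    equivMonoidAlgebraFreeMonoid.symm (MonoidAlgebra.single m c) =
      c • FreeMonomial k m.toList := by
  simp [equivMonoidAlgebraFreeMonoid, FreeMonoid.lift_apply, FreeMonomial]

lemma equivMonoidAlgebraFreeMonoid_freeMonomial (w : List X) :
    equivMonoidAlgebraFreeMonoid (FreeMonomial k w) =
      MonoidAlgebra.single (FreeMonoid.ofList w) 1 :=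
  (AlgEquiv.eq_symm_apply _).1 (by simp [equivMonoidAlgebraFreeMonoid_symm_single])

lemma sum_coeffWord_smul_freeMonomial (f : FreeAlgebra k X) :
    ((equivMonoidAlgebraFreeMonoid f).coeff.sum fun m c => c • FreeMonomial k m.toList) = f := by
  conv_rhs => rw [← equivMonoidAlgebraFreeMonoid.symm_apply_apply f,
    ← MonoidAlgebra.sum_coeff_single (equivMonoidAlgebraFreeMonoid f), map_finsuppSum]
  simp only [equivMonoidAlgebraFreeMonoid_symm_single]

lemma coeffWord_freeMonomial_self (w : List X) : coeffWord k (FreeMonomial k w) w = 1 := by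
  simp [coeffWord, equivMonoidAlgebraFreeMonoid_freeMonomial]

lemma coeffWord_freeMonomial_of_ne {w u : List X} (h : u ≠ w) :
    coeffWord k (FreeMonomial k w) u = 0 := by
  simp [coeffWord, equivMonoidAlgebraFreeMonoid_freeMonomial, MonoidAlgebra.coeff_single,
    Ne.symm h]

lemma coeffWord_add (f g : FreeAlgebra k X) (u : List X) :
    coeffWord k (f + g) u = coeffWord k f u + coeffWord k g u := by
  simp [coeffWord]

variable [LinearOrder X]

lemma isLeadWord_iff {f : FreeAlgebra k X} {w : List X} :
    IsLeadWord k f w ↔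
      coeffWord k f w ≠ 0 ∧ ∀ u, coeffWord k f u ≠ 0 → degLexKey u ≤ degLexKey w := by
  simp only [IsLeadWord, eq_or_degLexLT_iff_degLexKey_le]

lemma isLeadWord_freeMonomial (w : List X) : IsLeadWord k (FreeMonomial k w) w :=
  ⟨by simp [coeffWord_freeMonomial_self], fun u hu =>
    .inl (by_contra fun h => hu (coeffWord_freeMonomial_of_ne k h))⟩

lemma isLeadWord_freeMonomial_add {w u : List X} (h : DegLexLT u w) :
    IsLeadWord k (FreeMonomial k w + FreeMonomial k u) w := by
  have hne : w ≠ u := by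
    rintro rfl
    exact (degLexLT_iff_degLexKey_lt.1 h).false
  refine ⟨?_, fun v hv => ?_⟩
  · simp [coeffWord_add, coeffWord_freeMonomial_self, coeffWord_freeMonomial_of_ne k hne]
  · by_cases hvw : v = w
    · exact .inl hvw
    obtain rfl : v = u := by_contra fun hvu => hv <| by
      simp [coeffWord_add, coeffWord_freeMonomial_of_ne k hvw, coeffWord_freeMonomial_of_ne k hvu]
    exact .inr h

lemma exists_isLeadWord {f : FreeAlgebra k X} (hf : f ≠ 0) : ∃ w, IsLeadWord k f w := by
  set F := equivMonoidAlgebraFreeMonoid f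
  have hF : F.coeff.support.Nonempty := by
    simpa [Finsupp.support_nonempty_iff, F] using hf
  obtain ⟨m, hm, hmax⟩ := F.coeff.support.exists_max_image (degLexKey ∘ FreeMonoid.toList) hF
  refine ⟨m.toList, (isLeadWord_iff k).2 ⟨by simpa [coeffWord] using hm, fun u hu => ?_⟩⟩
  exact hmax (FreeMonoid.ofList u) (by simpa [coeffWord] using hu)

end Coefficients

def IsNormalWord {X : Type} (T : List (List X)) (w : List X) : Prop := ∀ t ∈ T, ¬ t <:+: w

lemma IsNormalWord.of_cons {X : Type} {T : List (List X)} {c : X} {w : List X}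
    (h : IsNormalWord T (c :: w)) : IsNormalWord T w :=
  fun t ht hw => h t ht (hw.trans (List.suffix_cons c w).isInfix)

lemma map_eq_zero_of_mem_twoSidedSpan (k : Type) [Field k] {X A : Type} [Semiring A] [Algebra k A]
    (φ : FreeAlgebra k X →ₐ[k] A) {G : Set (FreeAlgebra k X)} (hG : ∀ g ∈ G, φ g = 0)
    {f : FreeAlgebra k X} (hf : f ∈ twoSidedSpan k G) : φ f = 0 := by
  have : twoSidedSpan k G ≤ LinearMap.ker φ.toLinearMap :=
    Submodule.span_le.2 fun _ ⟨a, g, b, hg, hx⟩ => by simp [hx, hG g hg]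
  exact this hf

section LeftAction

variable (k : Type) [Field k] {X : Type} (red : X → List X → List X →₀ k)

open Finsupp

def leftAction : FreeAlgebra k X →ₐ[k] Module.End k (List X →₀ k) :=
  FreeAlgebra.lift k fun c => linearCombination k (red c)

lemma leftAction_freeMonomial (w : List X) :
    leftAction k red (FreeMonomial k w) = (w.map fun c => linearCombination k (red c)).prod := by
  simp [FreeMonomial, leftAction, map_list_prod, Function.comp_def]

def leftActionOnNil : FreeAlgebra k X →ₗ[k] List X →₀ k :=
  LinearMap.applyₗ (single [] 1) ∘ₗ (leftAction k red).toLinearMap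

lemma leftActionOnNil_freeMonomial_cons (c : X) (w : List X) :
    leftActionOnNil k red (FreeMonomial k (c :: w)) =
      linearCombination k (red c) (leftActionOnNil k red (FreeMonomial k w)) := by
  simp [leftActionOnNil, leftAction_freeMonomial, Module.End.mul_apply]

lemma leftActionOnNil_freeMonomial_nil :
    leftActionOnNil k red (FreeMonomial k []) = single [] 1 := by
  simp [leftActionOnNil, leftAction_freeMonomial]

lemma leftActionOnNil_freeMonomial_of_isNormalWord {T : List (List X)}
    (hred : ∀ c w, IsNormalWord T (c :: w) → red c w = single (c :: w) 1) {u : List X}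
    (hu : IsNormalWord T u) : leftActionOnNil k red (FreeMonomial k u) = single u 1 := by
  induction u with
  | nil => exact leftActionOnNil_freeMonomial_nil k red
  | cons c w ih =>
    rw [leftActionOnNil_freeMonomial_cons, ih hu.of_cons, linearCombination_single, one_smul,
      hred c w hu]

lemma leftAction_eq_zero_of_apply_single {g : FreeAlgebra k X}
    (h : ∀ w, leftAction k red g (single w 1) = 0) : leftAction k red g = 0 :=
  lhom_ext' fun w => LinearMap.ext_ring (by simpa using h w)

variable [LinearOrder X]

lemma degLexKey_le_of_mem_support_leftActionOnNil
    (hred : ∀ c w, ∀ v ∈ (red c w).support, degLexKey v ≤ degLexKey (c :: w)) (u : List X) :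
    ∀ v ∈ (leftActionOnNil k red (FreeMonomial k u)).support, degLexKey v ≤ degLexKey u := by
  induction u with
  | nil =>
    intro v hv
    rw [leftActionOnNil_freeMonomial_nil] at hv
    rw [Finset.mem_singleton.1 (support_single_subset hv)]
  | cons c w ih =>
    intro v hv
    rw [leftActionOnNil_freeMonomial_cons, linearCombination_apply] at hv
    obtain ⟨x, hx, hvx⟩ := Finset.mem_biUnion.1 (support_sum hv)
    exact (hred c x v (support_smul hvx)).trans (degLexKey_cons_le_cons c (ih x hx))

end LeftAction

section Criterion

variable {k : Type} [Field k] {X : Type} [LinearOrder X]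

lemma apply_eq_coeffWord_of_isLeadWord (ψ : FreeAlgebra k X →ₗ[k] List X →₀ k)
    (hψ : ∀ u, ∀ v ∈ (ψ (FreeMonomial k u)).support, degLexKey v ≤ degLexKey u)
    {f : FreeAlgebra k X} {w : List X} (hf : IsLeadWord k f w)
    (hw : ψ (FreeMonomial k w) = Finsupp.single w 1) :
    ψ f w = coeffWord k f w := by
  have hsmall : ∀ m : FreeMonoid X, m.toList ≠ w → coeffWord k f m.toList ≠ 0 →
      ψ (FreeMonomial k m.toList) w = 0 := by
    intro m hmw hm
    have hlt : degLexKey m.toList < degLexKey w :=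
      (((isLeadWord_iff k).1 hf).2 _ hm).lt_of_ne (degLexKey_injective.ne hmw)
    by_contra hne
    exact (hψ _ w (Finsupp.mem_support_iff.2 hne)).not_gt hlt
  conv_lhs => rw [← sum_coeffWord_smul_freeMonomial k f]
  rw [map_finsuppSum, Finsupp.sum_apply, Finsupp.sum_eq_single (FreeMonoid.ofList w)]
  · simp [hw, coeffWord]
  · intro m hm hmw
    have hmw' : m.toList ≠ w := fun h => hmw (by rw [← h, FreeMonoid.ofList_toList])
    rw [map_smul, Finsupp.smul_apply, hsmall m hmw' (by simpa [coeffWord] using hm), smul_zero]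
  · simp

theorem isGroebnerBasis_of_leftAction (red : X → List X → List X →₀ k)
    {G : Set (FreeAlgebra k X)} {T : List (List X)}
    (hT : ∀ t ∈ T, ∃ g ∈ G, IsLeadWord k g t) (hG : ∀ g ∈ G, leftAction k red g = 0)
    (hle : ∀ c w, ∀ v ∈ (red c w).support, degLexKey v ≤ degLexKey (c :: w))
    (hnormal : ∀ c w, IsNormalWord T (c :: w) → red c w = Finsupp.single (c :: w) 1) :
    IsGroebnerBasis k G := by
  intro f hf hf0
  obtain ⟨w, hw⟩ := exists_isLeadWord k hf0
  by_cases hwT : IsNormalWord T w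
  · have hψf : leftActionOnNil k red f = 0 := by
      simp [leftActionOnNil, map_eq_zero_of_mem_twoSidedSpan k _ hG hf]
    have := apply_eq_coeffWord_of_isLeadWord _
      (degLexKey_le_of_mem_support_leftActionOnNil k red hle) hw
      (leftActionOnNil_freeMonomial_of_isNormalWord k red hnormal hwT)
    exact absurd (by simpa [hψf] using this.symm) hw.1
  · obtain ⟨t, ht, htw⟩ : ∃ t ∈ T, t <:+: w := by simpa [IsNormalWord] using hwT
    obtain ⟨g, hg, hgt⟩ := hT t ht
    exact ⟨g, hg, w, t, hw, hgt, htw⟩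

end Criterion

namespace CounterexampleGroebner

open Finsupp

abbrev Word := List (Fin 4)

def zeroPrefixes : List Word :=
  [[1, 0], [0, 3], [0, 2], [2, 2, 3, 3], [1, 1, 2, 2, 2], [1, 1, 2, 2, 3]]

variable (k : Type) [Field k]

/-- The normal form of `c w` for normal `w`: `x²y²w ≡ -a⁴w`, and `a⁴w` vanishes modulo `ay, az`
when `w` begins with `y` or `z`. -/
def reduceCons (c : Fin 4) (w : Word) : Word →₀ k :=
  if ∃ t ∈ zeroPrefixes, t <+: c :: w then 0
  else if [1, 1, 2, 2] <+: c :: w then -single (0 :: 0 :: 0 :: 0 :: w.drop 3) 1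
  else single (c :: w) 1

def leadWords : List Word := [[1, 0], [0, 3], [0, 2], [2, 2, 3, 3], [1, 1, 2, 2]]

lemma reduceCons_of_isNormalWord {c : Fin 4} {w : Word} (h : IsNormalWord leadWords (c :: w)) :
    reduceCons k c w = single (c :: w) 1 := by
  have hinfix : ∀ t ∈ [1, 1, 2, 2] :: zeroPrefixes, ∃ s ∈ leadWords, s <:+: t := by decide
  rw [reduceCons, if_neg, if_neg]
  · exact fun hp => h _ (by decide) hp.isInfix
  · rintro ⟨t, ht, hp⟩
    obtain ⟨s, hs, hst⟩ := hinfix t (List.mem_cons_of_mem _ ht)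
    exact h s hs (hst.trans hp.isInfix)

lemma degLexKey_le_of_mem_support_reduceCons (c : Fin 4) (w : Word) :
    ∀ v ∈ (reduceCons k c w).support, degLexKey v ≤ degLexKey (c :: w) := by
  intro v hv
  unfold reduceCons at hv
  split_ifs at hv with hzero hbinom
  · simp at hv
  · obtain ⟨u, hu⟩ := hbinom
    obtain ⟨rfl, rfl⟩ : c = 1 ∧ w = 1 :: 2 :: 2 :: u := by simpa [eq_comm] using hu
    rw [support_neg] at hv
    rw [Finset.mem_singleton.1 (support_single_subset hv)]
    exact (degLexLT_iff_degLexKey_lt.1 (.inr ⟨by simp, .rel (by decide)⟩)).le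
  · rw [Finset.mem_singleton.1 (support_single_subset hv)]

lemma leftAction_xa : leftAction k (reduceCons k) (FreeMonomial k [1, 0]) = 0 := by
  refine leftAction_eq_zero_of_apply_single k _ fun w => ?_
  rcases w with _ | ⟨a, w⟩ <;> try fin_cases a
  all_goals simp [leftAction_freeMonomial, Module.End.mul_apply, reduceCons, zeroPrefixes]

lemma leftAction_az : leftAction k (reduceCons k) (FreeMonomial k [0, 3]) = 0 := by
  refine leftAction_eq_zero_of_apply_single k _ fun w => ?_
  simp [leftAction_freeMonomial, Module.End.mul_apply, reduceCons, zeroPrefixes]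

lemma leftAction_ay : leftAction k (reduceCons k) (FreeMonomial k [0, 2]) = 0 := by
  refine leftAction_eq_zero_of_apply_single k _ fun w => ?_
  simp [leftAction_freeMonomial, Module.End.mul_apply, reduceCons, zeroPrefixes, apply_ite]

lemma leftAction_y2z2 : leftAction k (reduceCons k) (FreeMonomial k [2, 2, 3, 3]) = 0 := by
  refine leftAction_eq_zero_of_apply_single k _ fun w => ?_
  simp [leftAction_freeMonomial, Module.End.mul_apply, reduceCons, zeroPrefixes]

lemma leftAction_x2y2_add_a4 :
    leftAction k (reduceCons k) (FreeMonomial k [1, 1, 2, 2] + FreeMonomial k [0, 0, 0, 0]) =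
      0 := by
  refine leftAction_eq_zero_of_apply_single k _ fun w => ?_
  rcases w with _ | ⟨a, w⟩ <;> try fin_cases a
  all_goals simp [leftAction_freeMonomial, Module.End.mul_apply, reduceCons, zeroPrefixes,
    apply_ite]

end CounterexampleGroebner

open CounterexampleGroebner

/-- Generators are encoded as `a = 0, x = 1, y = 2, z = 3 : Fin 4`, so that the deg-lex order
has `z > y > x > a`. -/
theorem counterexample_groebner_basis (k : Type) [Field k] :
    IsGroebnerBasis k
      ({ FreeMonomial k [1, 0],                          -- xa
         FreeMonomial k [0, 3],                          -- az
         FreeMonomial k [0, 2],                          -- ay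
         FreeMonomial k [2, 2, 3, 3],                    -- y²z²
         FreeMonomial k [1, 1, 2, 2] + FreeMonomial k [0, 0, 0, 0]  -- x²y² + a⁴
       } : Set (FreeAlgebra k (Fin 4))) := by
  refine isGroebnerBasis_of_leftAction (T := leadWords) (reduceCons k) ?_ ?_
    (degLexKey_le_of_mem_support_reduceCons k) (fun _ _ => reduceCons_of_isNormalWord k)
  · intro t ht
    simp only [leadWords, List.mem_cons, List.not_mem_nil, or_false] at ht
    rcases ht with rfl | rfl | rfl | rfl | rfl
    iterate 4 exact ⟨_, by simp, isLeadWord_freeMonomial k _⟩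
    exact ⟨_, by simp,
      isLeadWord_freeMonomial_add k (u := [0, 0, 0, 0]) (.inr ⟨rfl, .rel (by decide)⟩)⟩
  · rintro g (rfl | rfl | rfl | rfl | rfl)
    exacts [leftAction_xa k, leftAction_az k, leftAction_ay k, leftAction_y2z2 k,
      leftAction_x2y2_add_a4 k]
end
end
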